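/- arXiv:1901.01420 — 5 statements merged into one kernel-verified Lean document; each statement's English description precedes it below -/
import Mathlib

section
/- Let X be a Baire topological group with identity e and let 𝒩 be a countable family of subsets of X that is a network at e. For N ∈ 𝒩 let cl(N) denote the closure of N and let int(N⁻¹·cl(N)) denote the interior of the set N⁻¹·cl(N) = {x⁻¹y : x ∈ N, y ∈ cl(N)}. Then the family ℬ = {int(N⁻¹·cl(N)) : N ∈ 𝒩, e ∈ int(N⁻¹·cl(N))} is a (countable) neighborhood base at e: every neighborhood U of e contains some member of ℬ, and every member of ℬ is a neighborhood of e. -/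
/-!
Given a neighbourhood `U` of `1`, pick a closed symmetric `V ∈ 𝓝 1` with `V * V ⊆ U`; then
`N⁻¹ * closure N ⊆ U` for every `N ⊆ V`. The members of `𝒩` inside `V` cover a neighbourhood of `1`,
so by the Baire property one of them, `N`, has somewhere dense closure. The open set
`interior (closure N)` then meets `N` in some `n`, and `1 = n⁻¹ * n` lies in the open set
`N⁻¹ * interior (closure N) ⊆ N⁻¹ * closure N`.
-/

open Set Pointwise

variable {X : Type*}

/-- A family `𝒩` of subsets of `X` is a network at the point `x`: for every neighborhood `O`
of `x`, the union of all members of `𝒩` contained in `O` is a neighborhood of `x`. -/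
def IsNetworkAt [TopologicalSpace X] (𝒩 : Set (Set X)) (x : X) : Prop :=
  ∀ O ∈ nhds x, (⋃₀ {N | N ∈ 𝒩 ∧ N ⊆ O}) ∈ nhds x

open Topology

theorem exists_mem_nonempty_interior_closure_of_countable [TopologicalSpace X] [BaireSpace X]
    {𝒜 : Set (Set X)} (h𝒜 : 𝒜.Countable) (hint : (interior (⋃₀ 𝒜)).Nonempty) :
    ∃ A ∈ 𝒜, (interior (closure A)).Nonempty := by
  by_contra! hnowhere
  have hmeagre : IsMeagre (⋃₀ 𝒜) :=
    isMeagre_iff_countable_union_isNowhereDense.2 ⟨𝒜, hnowhere, h𝒜, subset_rfl⟩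
  exact not_isMeagre_of_isOpen isOpen_interior hint (hmeagre.mono interior_subset)

section TopologicalGroup

variable {G : Type*} [TopologicalSpace G] [Group G]

theorem one_mem_interior_inv_mul_closure [ContinuousConstSMul G G] {N : Set G}
    (hN : (interior (closure N)).Nonempty) : (1 : G) ∈ interior (N⁻¹ * closure N) := by
  obtain ⟨x, hx⟩ := hN
  obtain ⟨n, hn, hnN⟩ :=
    mem_closure_iff.1 (interior_subset hx) _ isOpen_interior hx
  have h1 : (1 : G) ∈ N⁻¹ * interior (closure N) := by
    simpa using mul_mem_mul (inv_mem_inv.2 hnN) hn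
  exact subset_interior_mul_right h1

theorem exists_mem_nhds_one_forall_subset_inv_mul_closure_subset [IsTopologicalGroup G]
    {U : Set G} (hU : U ∈ 𝓝 1) : ∃ V ∈ 𝓝 (1 : G), ∀ N ⊆ V, N⁻¹ * closure N ⊆ U := by
  obtain ⟨V, hV, hVclosed, hVinv, hVU⟩ := exists_closed_nhds_one_inv_eq_mul_subset hU
  refine ⟨V, hV, fun N hNV => ?_⟩
  have hNinv : N⁻¹ ⊆ V := hVinv ▸ inv_subset_inv.2 hNV
  exact (mul_subset_mul hNinv (closure_minimal hNV hVclosed)).trans hVU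

end TopologicalGroup

/-- Let `X` be a Baire topological group with identity `e = 1` and let `𝒩` be a
countable family of subsets of `X` which is a network at `e`.  Then the family
`ℬ = {interior (N⁻¹ * closure N) : N ∈ 𝒩, e ∈ interior (N⁻¹ * closure N)}` is a countable
neighborhood base at `e`: every neighborhood `U` of `e` contains some member of `ℬ`, and
every member of `ℬ` is a neighborhood of `e`. -/
theorem statement_4 {X : Type*} [TopologicalSpace X] [Group X] [IsTopologicalGroup X]
    [BaireSpace X] (𝒩 : Set (Set X)) (hcount : 𝒩.Countable)
    (hnet : IsNetworkAt 𝒩 (1 : X)) (ℬ : Set (Set X))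
    (hℬ : ℬ = {B : Set X | ∃ N ∈ 𝒩, B = interior (N⁻¹ * closure N) ∧
      (1 : X) ∈ interior (N⁻¹ * closure N)}) :
    ℬ.Countable ∧ (∀ U ∈ nhds (1 : X), ∃ B ∈ ℬ, B ⊆ U) ∧ (∀ B ∈ ℬ, B ∈ nhds (1 : X)) := by
  subst hℬ
  refine ⟨(hcount.image fun N => interior (N⁻¹ * closure N)).mono ?_, fun U hU => ?_, ?_⟩
  · rintro _ ⟨N, hN, rfl, -⟩
    exact ⟨N, hN, rfl⟩
  · obtain ⟨V, hV, hVU⟩ := exists_mem_nhds_one_forall_subset_inv_mul_closure_subset hU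
    obtain ⟨N, ⟨hN, hNV⟩, hNint⟩ := exists_mem_nonempty_interior_closure_of_countable
      (hcount.mono fun _ hN => hN.1) ⟨1, mem_interior_iff_mem_nhds.2 (hnet V hV)⟩
    exact ⟨_, ⟨N, hN, rfl, one_mem_interior_inv_mul_closure hNint⟩,
      interior_subset.trans (hVU N hNV)⟩
  · rintro _ ⟨N, -, rfl, h1⟩
    exact isOpen_interior.mem_nhds h1
end

section
/- Let Y be a topological group and let X be a dense subgroup of Y such that X, with the subspace topology, is a Choquet space. Then X is Gδ-dense in Y, i.e., X has non-empty intersection with every non-empty Gδ-subset of Y. -/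
open Set

variable {X : Type*}

/-- Positions in the Choquet game on `X` consistent with the strategy `σ` of player `N`
(the "nonempty" player): a position is recorded as the list of player `E`'s moves so far,
most recent first.  Player `E` starts the game with an arbitrary nonempty open set, and each
subsequent move of `E` must be a nonempty open subset of `N`'s answer `σ l` to the previous
position `l`. -/
inductive ChoquetPos [TopologicalSpace X] (σ : List (Set X) → Set X) : List (Set X) → Prop
  | single (U : Set X) : IsOpen U → U.Nonempty → ChoquetPos σ [U]
  | cons (U : Set X) (l : List (Set X)) : ChoquetPos σ l → IsOpen U → U.Nonempty →
      U ⊆ σ l → ChoquetPos σ (U :: l)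

/-- The list of the first `n+1` moves of player `E` in a run `e`, most recent first. -/
def choquetHist (e : ℕ → Set X) : ℕ → List (Set X)
  | 0 => [e 0]
  | n + 1 => e (n + 1) :: choquetHist e n

/-- `σ` is a winning strategy for player `N` (the nonempty player) in the Choquet game on `X`:
at every position reachable against `σ`, the answer `σ l` is a legal move (a nonempty open
subset of `E`'s last move), and for every infinite run of the game in which `E` plays legally
and `N` follows `σ`, the intersection of all moves played is nonempty (since the moves
decrease, this intersection equals `⋂ n, e n` where `e` enumerates `E`'s moves). -/
def IsWinningChoquetStrategy [TopologicalSpace X] (σ : List (Set X) → Set X) : Prop :=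
  (∀ l, ChoquetPos σ l → IsOpen (σ l) ∧ (σ l).Nonempty ∧ ∀ U ∈ l.head?, σ l ⊆ U) ∧
  (∀ e : ℕ → Set X, (∀ n, ChoquetPos σ (choquetHist e n)) → (⋂ n, e n).Nonempty)

/-- A topological space is Choquet if player `N` has a winning strategy in the Choquet game. -/
def IsChoquet (X : Type*) [TopologicalSpace X] : Prop :=
  ∃ σ : List (Set X) → Set X, IsWinningChoquetStrategy σ

/-- A subset `A` of a topological space is `Gδ`-dense if it has nonempty intersection with
every nonempty `Gδ`-subset. -/
def IsGδDense {Y : Type*} [TopologicalSpace Y] (A : Set Y) : Prop :=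
  ∀ G : Set Y, IsGδ G → G.Nonempty → (A ∩ G).Nonempty

/-!
Let `y ∈ ⋂ₙ Wₙ` with `Wₙ` open. Play two Choquet games on `X` against a winning strategy, one
for `X` itself and one for its homeomorphic copy `X y`, both dense in `Y`. Interleave them so
that at stage `n` the last move of the second game and the next move of the first are traces
of one open set `Oₙ ⊆ Y` with `y Oₙ⁻¹ Oₙ ⊆ Wₙ`; density of `X` and `X y` makes every such move
nonempty. The two winning plays give `α ∈ X` and `ξ y ∈ X y` lying in every `Oₙ`, so
`ξ⁻¹ α = y (ξ y)⁻¹ α` is a point of `X` in every `Wₙ`.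
-/

open Filter Topology

theorem choquetHist_headI {L : ℕ → List (Set X)} (h₀ : ∃ U, L 0 = [U])
    (hsucc : ∀ n, ∃ U, L (n + 1) = U :: L n) (n : ℕ) :
    choquetHist (fun n => (L n).headI) n = L n := by
  induction n with
  | zero => obtain ⟨U, hU⟩ := h₀; simp [choquetHist, hU]
  | succ n ih => obtain ⟨U, hU⟩ := hsucc n; simp [choquetHist, ih, hU]

section

variable {A B Y : Type*} [TopologicalSpace A] [TopologicalSpace B] [TopologicalSpace Y]

theorem Topology.IsInducing.exists_isOpen_subset_preimage_eq {f : A → Y} (hf : IsInducing f)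
    {s : Set A} (hs : IsOpen s) {O : Set Y} (hO : IsOpen O) (hsO : s ⊆ f ⁻¹' O) :
    ∃ T, IsOpen T ∧ T ⊆ O ∧ f ⁻¹' T = s := by
  obtain ⟨T, hT, rfl⟩ := hf.isOpen_iff.mp hs
  exact ⟨T ∩ O, hT.inter hO, inter_subset_right, by rw [preimage_inter, inter_eq_left.mpr hsO]⟩

theorem DenseRange.exists_isOpen_subset_prod_subset {ι : Type*} {g : ι → Y} (hg : DenseRange g)
    {S : Set Y} (hS : IsOpen S) (hSne : S.Nonempty) {U : Set (Y × Y)}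
    (hU : U ∈ 𝓝ˢ (diagonal Y)) :
    ∃ O, IsOpen O ∧ O ⊆ S ∧ (g ⁻¹' O).Nonempty ∧ O ×ˢ O ⊆ U := by
  obtain ⟨b, hb⟩ := hg.exists_mem_open hS hSne
  have hU' : U ∈ 𝓝 (g b) ×ˢ 𝓝 (g b) := by
    rw [← nhds_prod_eq]
    exact mem_nhdsSet_iff_forall.mp hU _ rfl
  obtain ⟨P, ⟨hbP, hP⟩, hPU⟩ := (nhds_basis_opens (g b)).prod_self.mem_iff.mp hU'
  exact ⟨S ∩ P, hS.inter hP, inter_subset_left, ⟨b, hb, hbP⟩,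
    (prod_mono inter_subset_right inter_subset_right).trans hPU⟩

/-- Simultaneous plays against `σ` on `A` and against `τ` on `B`, in which the last move of the
second and the next move of the first are the traces of the same open set `region` of `Y`. -/
structure CoupledPlay (f : A → Y) (g : B → Y) (σ : List (Set A) → Set A)
    (τ : List (Set B) → Set B) where
  play₁ : List (Set A)
  play₂ : List (Set B)
  region : Set Y
  isOpen_region : IsOpen region
  pos₁ : ChoquetPos σ play₁
  pos₂ : ChoquetPos τ play₂
  head_play₂ : play₂.head? = some (g ⁻¹' region)
  preimage_region_subset : f ⁻¹' region ⊆ σ play₁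

namespace CoupledPlay

variable {f : A → Y} {g : B → Y} {σ : List (Set A) → Set A} {τ : List (Set B) → Set B}

theorem exists_initial [Nonempty A] (hf : IsInducing f) (hg : Continuous g)
    (hg' : DenseRange g) (hσ : IsWinningChoquetStrategy σ) :
    ∃ s : CoupledPlay f g σ τ, (∃ U, s.play₁ = [U]) ∧ ∃ V, s.play₂ = [V] := by
  have pos₁ : ChoquetPos σ [univ] := .single univ isOpen_univ univ_nonempty
  obtain ⟨hσo, hσne, -⟩ := hσ.1 _ pos₁
  obtain ⟨S, hS, -, hSσ⟩ :=
    hf.exists_isOpen_subset_preimage_eq hσo isOpen_univ fun _ _ => mem_univ _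
  obtain ⟨b, hb⟩ := hg'.exists_mem_open hS (nonempty_of_nonempty_preimage (hSσ ▸ hσne))
  exact ⟨⟨[univ], [g ⁻¹' S], S, hS, pos₁, .single _ (hS.preimage hg) ⟨b, hb⟩, rfl, hSσ.le⟩,
    ⟨_, rfl⟩, _, rfl⟩

theorem exists_next (hf : IsInducing f) (hf' : DenseRange f) (hg : IsInducing g)
    (hg' : DenseRange g) (hσ : IsWinningChoquetStrategy σ) (hτ : IsWinningChoquetStrategy τ)
    (s : CoupledPlay f g σ τ) {U : Set (Y × Y)} (hU : U ∈ 𝓝ˢ (diagonal Y)) :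
    ∃ s' : CoupledPlay f g σ τ, (∃ T ⊆ s.region, s'.play₁ = f ⁻¹' T :: s.play₁) ∧
      s'.play₂ = g ⁻¹' s'.region :: s.play₂ ∧ s'.region ×ˢ s'.region ⊆ U := by
  obtain ⟨hτo, hτne, hτsub⟩ := hτ.1 _ s.pos₂
  obtain ⟨T, hT, hTO, hTτ⟩ :=
    hg.exists_isOpen_subset_preimage_eq hτo s.isOpen_region (hτsub _ s.head_play₂)
  obtain ⟨a, ha⟩ := hf'.exists_mem_open hT (nonempty_of_nonempty_preimage (hTτ ▸ hτne))
  have pos₁ : ChoquetPos σ (f ⁻¹' T :: s.play₁) :=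
    .cons _ _ s.pos₁ (hT.preimage hf.continuous) ⟨a, ha⟩
      ((preimage_mono hTO).trans s.preimage_region_subset)
  obtain ⟨hσo, hσne, hσsub⟩ := hσ.1 _ pos₁
  obtain ⟨S, hS, hST, hSσ⟩ := hf.exists_isOpen_subset_preimage_eq hσo hT (hσsub _ rfl)
  obtain ⟨O, hO, hOS, hOne, hOU⟩ :=
    hg'.exists_isOpen_subset_prod_subset hS (nonempty_of_nonempty_preimage (hSσ ▸ hσne)) hU
  have pos₂ : ChoquetPos τ (g ⁻¹' O :: s.play₂) :=
    .cons _ _ s.pos₂ (hO.preimage hg.continuous) hOne (hTτ ▸ preimage_mono (hOS.trans hST))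
  exact ⟨⟨_, _, O, hO, pos₁, pos₂, rfl, hSσ ▸ preimage_mono hOS⟩, ⟨T, hTO, rfl⟩, rfl, hOU⟩

end CoupledPlay

theorem IsChoquet.exists_forall_mem_of_denseRange [Nonempty A] (hA : IsChoquet A)
    (hB : IsChoquet B) {f : A → Y} {g : B → Y} (hf : IsInducing f) (hf' : DenseRange f)
    (hg : IsInducing g) (hg' : DenseRange g) {V : ℕ → Set (Y × Y)}
    (hV : ∀ n, V n ∈ 𝓝ˢ (diagonal Y)) :
    ∃ a b, ∀ n, (f a, g b) ∈ V n := by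
  obtain ⟨σ, hσ⟩ := hA
  obtain ⟨τ, hτ⟩ := hB
  obtain ⟨s₀, h₀₁, h₀₂⟩ := CoupledPlay.exists_initial (τ := τ) hf hg.continuous hg' hσ
  choose next hnext₁ hnext₂ hnext₃ using
    fun (s : CoupledPlay f g σ τ) n => s.exists_next hf hf' hg hg' hσ hτ (hV n)
  let run : ℕ → CoupledPlay f g σ τ := fun n => Nat.rec s₀ (fun n s => next s n) n
  have hist₁ := choquetHist_headI (L := fun n => (run n).play₁) h₀₁ fun n =>
    let ⟨T, _, h⟩ := hnext₁ (run n) n; ⟨f ⁻¹' T, h⟩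
  have hist₂ := choquetHist_headI (L := fun n => (run n).play₂) h₀₂ fun n => ⟨_, hnext₂ (run n) n⟩
  obtain ⟨a, ha⟩ := hσ.2 _ fun n => (hist₁ n).symm ▸ (run n).pos₁
  obtain ⟨b, hb⟩ := hτ.2 _ fun n => (hist₂ n).symm ▸ (run n).pos₂
  refine ⟨a, b, fun n => hnext₃ (run n) n ⟨?_, ?_⟩⟩
  · obtain ⟨T, hT, hplay⟩ := hnext₁ (run (n + 1)) (n + 1)
    have ha' := mem_iInter.mp ha (n + 2)
    simp only [run, hplay] at ha'
    exact hT ha'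
  · have hb' := mem_iInter.mp hb (n + 1)
    simp only [run, hnext₂ (run n) n] at hb'
    exact hb'

end

/-- Let `Y` be a topological group and let `X` be a dense subgroup of `Y` such
that `X`, with the subspace topology, is a Choquet space.  Then `X` is `Gδ`-dense in `Y`. -/
theorem statement_6 {Y : Type*} [TopologicalSpace Y] [Group Y] [IsTopologicalGroup Y]
    (X : Subgroup Y) (hdense : Dense (X : Set Y)) (hChoquet : IsChoquet ↥X) :
    IsGδDense (X : Set Y) := by
  rintro G hG ⟨y, hy⟩
  obtain ⟨W, hW, rfl⟩ := isGδ_iff_eq_iInter_nat.mp hG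
  have hyW : ∀ n, y ∈ W n := mem_iInter.mp hy
  have hV : ∀ n, {p : Y × Y | y * (p.2⁻¹ * p.1) ∈ W n} ∈ 𝓝ˢ (diagonal Y) := fun n =>
    ((hW n).preimage (by fun_prop)).mem_nhdsSet.mpr fun p (hp : p.1 = p.2) => by
      simpa [hp] using hyW n
  have hshift : IsInducing fun x : X => (x : Y) * y :=
    (Homeomorph.mulRight y).isInducing.comp IsInducing.subtypeVal
  have hshift' : DenseRange fun x : X => (x : Y) * y :=
    (Homeomorph.mulRight y).surjective.denseRange.comp hdense.denseRange_val (by fun_prop)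
  obtain ⟨α, ξ, h⟩ := hChoquet.exists_forall_mem_of_denseRange hChoquet IsInducing.subtypeVal
    hdense.denseRange_val hshift hshift' hV
  refine ⟨(ξ : Y)⁻¹ * α, X.mul_mem (X.inv_mem ξ.2) α.2, mem_iInter.mpr fun n => ?_⟩
  simpa [mul_assoc] using h n
end

section
/- Let Y be a Choquet topological space and let X ⊆ Y be a Gδ-dense subset of Y. Then X, with the subspace topology, is a Choquet space. -/
open Set

variable {X : Type*}

/-!
Player `N` in `X` plays by simulating a winning strategy `σ` of the game on `Y`. A move `U` of `E`
in `X` is replaced by the largest open set of `Y` whose trace on `X` is `U`, cut down to `σ`'s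
previous answer; `N` answers with the trace on `X` of `σ`'s reply, which is nonempty because `X`
is dense. In a run, the simulated moves of `E` in `Y` have nonempty intersection since `σ` wins;
this intersection is a `Gδ`, so it meets `X`, and such a point lies in every move of `E` in `X`.
-/

theorem IsGδDense.dense {Y : Type*} [TopologicalSpace Y] {A : Set Y} (hA : IsGδDense A) :
    Dense A :=
  dense_iff_inter_open.mpr fun U hU hne => inter_comm A U ▸ hA U hU.isGδ hne

theorem ChoquetPos.isOpen_of_choquetHist {Y : Type*} [TopologicalSpace Y]
    {σ : List (Set Y) → Set Y} {e : ℕ → Set Y} {n : ℕ} (h : ChoquetPos σ (choquetHist e n)) :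
    IsOpen (e n) := by
  obtain ⟨l, hl⟩ : ∃ l, choquetHist e n = e n :: l := by cases n <;> exact ⟨_, rfl⟩
  rw [hl] at h
  cases h <;> assumption

section Simulation

variable {Y : Type*} [TopologicalSpace Y] (A : Set Y)

def openExt (U : Set A) : Set Y :=
  ⋃₀ {V : Set Y | IsOpen V ∧ Subtype.val ⁻¹' V ⊆ U}

theorem isOpen_openExt (U : Set A) : IsOpen (openExt A U) :=
  isOpen_sUnion fun _ hV => hV.1

theorem preimage_openExt_subset (U : Set A) : Subtype.val ⁻¹' openExt A U ⊆ U := by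
  rintro x ⟨V, ⟨-, hVU⟩, hxV⟩
  exact hVU hxV

theorem preimage_openExt {U : Set A} (hU : IsOpen U) : Subtype.val ⁻¹' openExt A U = U := by
  refine (preimage_openExt_subset A U).antisymm ?_
  obtain ⟨V, hV, rfl⟩ := isOpen_induced_iff.mp hU
  exact fun x hx => ⟨V, ⟨hV, subset_rfl⟩, hx⟩

/-- `σ` answering `univ` to the empty position, so that `E`'s unconstrained first move is
treated like the later ones. -/
def answer (σ : List (Set Y) → Set Y) : List (Set Y) → Set Y
  | [] => univ
  | m => σ m

theorem answer_of_choquetPos {σ : List (Set Y) → Set Y} {m : List (Set Y)}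
    (hm : ChoquetPos σ m) : answer σ m = σ m := by
  cases hm <;> rfl

variable (σ : List (Set Y) → Set Y)

def simPos : List (Set A) → List (Set Y)
  | [] => []
  | U :: l => (openExt A U ∩ answer σ (simPos l)) :: simPos l

def simMove (U : Set A) (l : List (Set A)) : Set Y :=
  openExt A U ∩ answer σ (simPos A σ l)

def simStrategy (l : List (Set A)) : Set A :=
  Subtype.val ⁻¹' answer σ (simPos A σ l)

variable {A σ}

theorem preimage_simMove {U : Set A} {l : List (Set A)} (hU : IsOpen U)
    (hUl : U ⊆ simStrategy A σ l) :
    Subtype.val ⁻¹' simMove A σ U l = U := by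
  rw [simMove, preimage_inter, preimage_openExt A hU]
  exact inter_eq_left.mpr hUl

theorem nonempty_simMove {U : Set A} {l : List (Set A)} (hU : IsOpen U) (hne : U.Nonempty)
    (hUl : U ⊆ simStrategy A σ l) : (simMove A σ U l).Nonempty := by
  obtain ⟨x, hx⟩ := hne
  rw [← preimage_simMove hU hUl] at hx
  exact ⟨x, hx⟩

theorem choquetPos_simPos (hσ : IsWinningChoquetStrategy σ) {l : List (Set A)}
    (hl : ChoquetPos (simStrategy A σ) l) : ChoquetPos σ (simPos A σ l) := by
  induction hl with
  | single U hU hne =>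
    exact .single _ ((isOpen_openExt A U).inter isOpen_univ)
      (nonempty_simMove hU hne fun _ _ => trivial)
  | cons U l _ hU hne hUl ih =>
    have hans : answer σ (simPos A σ l) = σ (simPos A σ l) := answer_of_choquetPos ih
    refine .cons _ _ ih ?_ (nonempty_simMove hU hne hUl) (hans ▸ inter_subset_right)
    exact (isOpen_openExt A U).inter (hans ▸ (hσ.1 _ ih).1)

theorem simStrategy_legal (hA : Dense A) (hσ : IsWinningChoquetStrategy σ) {l : List (Set A)}
    (hl : ChoquetPos (simStrategy A σ) l) :
    IsOpen (simStrategy A σ l) ∧ (simStrategy A σ l).Nonempty ∧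
      ∀ U ∈ l.head?, simStrategy A σ l ⊆ U := by
  have hpos := choquetPos_simPos hσ hl
  obtain ⟨hopen, hne, hsub⟩ := hσ.1 _ hpos
  rw [simStrategy, answer_of_choquetPos hpos]
  refine ⟨hopen.preimage continuous_subtype_val,
    Subtype.preimage_coe_nonempty.mpr (inter_comm _ A ▸ hA.inter_open_nonempty _ hopen hne), ?_⟩
  intro U hU
  obtain ⟨t, rfl⟩ := List.head?_eq_some_iff.mp hU
  exact (preimage_mono ((hsub _ rfl).trans inter_subset_left)).trans
    (preimage_openExt_subset A U)

theorem simStrategy_wins (hA : IsGδDense A) (hσ : IsWinningChoquetStrategy σ) (e : ℕ → Set A)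
    (he : ∀ n, ChoquetPos (simStrategy A σ) (choquetHist e n)) : (⋂ n, e n).Nonempty := by
  set E : ℕ → Set Y := fun n => simMove A σ (e n) (choquetHist e n).tail
  have hsim : ∀ n, simPos A σ (choquetHist e n) = choquetHist E n := by
    intro n
    induction n with
    | zero => rfl
    | succ n ih => rw [choquetHist, choquetHist, ← ih]; rfl
  have hpos : ∀ n, ChoquetPos σ (choquetHist E n) := fun n => hsim n ▸ choquetPos_simPos hσ (he n)
  obtain ⟨x, hxA, hx⟩ :=
    hA _ (.iInter fun n => (hpos n).isOpen_of_choquetHist.isGδ) (hσ.2 E hpos)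
  exact ⟨⟨x, hxA⟩, mem_iInter.mpr fun n => preimage_openExt_subset A (e n) (mem_iInter.mp hx n).1⟩

end Simulation

/-- Let `Y` be a Choquet topological space and let `X ⊆ Y` be a `Gδ`-dense
subset of `Y`.  Then `X`, with the subspace topology, is a Choquet space. -/
theorem statement_7 {Y : Type*} [TopologicalSpace Y] (hY : IsChoquet Y)
    (X : Set Y) (hX : IsGδDense X) : IsChoquet ↥X := by
  obtain ⟨σ, hσ⟩ := hY
  exact ⟨simStrategy X σ, fun _ hl => simStrategy_legal hX.dense hσ hl, simStrategy_wins hX hσ⟩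
end

section
/- Let X be a topological space containing a dense subspace D such that D, with the subspace topology, is a Choquet space. Then X is a Choquet space. -/
open Set

variable {X : Type*}

/-!
Player `N` in `X` plays the game on `D` in the background, feeding it the traces `U ∩ D` of
`E`'s moves; density makes these traces nonempty, hence legal moves in `D`. `N` answers in `X`
with the largest open set whose trace is the answer in `D`, cut down to `E`'s last move. A point
of `D` common to all traces is then common to all of `E`'s moves in `X`.
-/

theorem choquetHist_map {Y : Type*} (g : Set X → Set Y) (e : ℕ → Set X) (n : ℕ) :
    choquetHist (g ∘ e) n = (choquetHist e n).map g := by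
  induction n with
  | zero => rfl
  | succ n ih => simp only [choquetHist, List.map_cons, ih, Function.comp_apply]

section Lift

variable [TopologicalSpace X] {D : Set X}

def openExtension (D : Set X) (W : Set D) : Set X :=
  interior (((↑) : D → X) '' W ∪ Dᶜ)

theorem isOpen_openExtension (W : Set D) : IsOpen (openExtension D W) :=
  isOpen_interior

theorem IsOpen.preimage_val_openExtension {W : Set D} (hW : IsOpen W) :
    ((↑) : D → X) ⁻¹' openExtension D W = W := by
  refine Subset.antisymm (fun x hx => ?_) ?_
  · rcases interior_subset hx with hxW | hxD
    · exact Subtype.val_injective.mem_set_image.mp hxW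
    · exact absurd x.2 hxD
  · obtain ⟨U, hU, rfl⟩ := isOpen_induced_iff.mp hW
    refine preimage_mono (interior_maximal (fun y hy => ?_) hU)
    by_cases hyD : y ∈ D
    · exact Or.inl ⟨⟨y, hyD⟩, hy, rfl⟩
    · exact Or.inr hyD

theorem Dense.preimage_val_nonempty (hD : Dense D) {U : Set X} (hU : IsOpen U)
    (hne : U.Nonempty) : (((↑) : D → X) ⁻¹' U).Nonempty :=
  hD.denseRange_val.exists_mem_open hU hne

def liftStrategy (D : Set X) (σ : List (Set D) → Set D) (l : List (Set X)) : Set X :=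
  openExtension D (σ (l.map (preimage (↑)))) ∩ l.head?.getD univ

theorem ChoquetPos.exists_eq_cons {σ : List (Set X) → Set X} {l : List (Set X)}
    (hl : ChoquetPos σ l) : ∃ U l', l = U :: l' ∧ IsOpen U := by
  cases hl with
  | single U hU _ => exact ⟨U, [], rfl, hU⟩
  | cons U l' _ hU _ _ => exact ⟨U, l', rfl, hU⟩

theorem ChoquetPos.map_preimage_val (hD : Dense D) {σ : List (Set D) → Set D}
    (hσ : ∀ l, ChoquetPos σ l → IsOpen (σ l)) {l : List (Set X)}
    (hl : ChoquetPos (liftStrategy D σ) l) : ChoquetPos σ (l.map (preimage (↑))) := by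
  induction hl with
  | single U hU hne =>
    exact .single _ (hU.preimage continuous_subtype_val) (hD.preimage_val_nonempty hU hne)
  | cons U l _ hU hne hUσ ih =>
    refine .cons _ _ ih (hU.preimage continuous_subtype_val) (hD.preimage_val_nonempty hU hne) ?_
    rw [← (hσ _ ih).preimage_val_openExtension]
    exact preimage_mono (hUσ.trans inter_subset_left)

theorem IsWinningChoquetStrategy.liftStrategy (hD : Dense D) {σ : List (Set D) → Set D}
    (hσ : IsWinningChoquetStrategy σ) :
    IsWinningChoquetStrategy (_root_.liftStrategy D σ) := by
  obtain ⟨hlegal, hwin⟩ := hσ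
  have hpos {l} (hl : ChoquetPos (_root_.liftStrategy D σ) l) :
      ChoquetPos σ (l.map (preimage (↑))) :=
    hl.map_preimage_val hD fun l hl => (hlegal l hl).1
  refine ⟨fun l hl => ?_, fun e he => ?_⟩
  · obtain ⟨hopen, ⟨d, hd⟩, hsub⟩ := hlegal _ (hpos hl)
    obtain ⟨U, l', rfl, hU⟩ := hl.exists_eq_cons
    refine ⟨(isOpen_openExtension _).inter hU, ⟨d, ?_, hsub _ rfl hd⟩, fun V hV => ?_⟩
    · rwa [← hopen.preimage_val_openExtension] at hd
    · cases hV
      exact inter_subset_right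
  · obtain ⟨d, hd⟩ := hwin (preimage (↑) ∘ e) fun n => by
      rw [choquetHist_map]
      exact hpos (he n)
    exact ⟨d, mem_iInter.mpr fun n => mem_iInter.mp hd n⟩

end Lift

/-- Let `X` be a topological space containing a dense subspace `D` such that
`D`, with the subspace topology, is a Choquet space.  Then `X` is a Choquet space. -/
theorem statement_8 {X : Type*} [TopologicalSpace X] (D : Set X) (hdense : Dense D)
    (hD : IsChoquet ↥D) : IsChoquet X := by
  obtain ⟨σ, hσ⟩ := hD
  exact ⟨liftStrategy D σ, hσ.liftStrategy hdense⟩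
end

section
/- Every metrizable topological group X that is a Choquet space is completely metrizable (i.e., its topology is induced by a complete metric). -/
open Set

variable {X : Type*}

/-- A topological space is completely metrizable if its topology is induced by a complete
metric. -/
def IsCompletelyMetrizable (X : Type*) [t : TopologicalSpace X] : Prop :=
  ∃ m : MetricSpace X, m.toUniformSpace.toTopologicalSpace = t ∧
    @CompleteSpace X m.toUniformSpace

/-!
Give `X` its two-sided uniformity, in which `x` and `y` are close when both `x⁻¹ * y` and
`y * x⁻¹` are close to `1`. It induces the topology and is countably generated, so it suffices
to show that it is complete. Inversion is uniformly continuous for it (unlike for the one-sided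
uniformities, which it exchanges) and multiplication maps Cauchy filters to Cauchy filters, so
both extend to its completion `X̂`, the Raikov completion: a completely metrizable, hence Baire,
topological group containing `X` as a dense subgroup.

A Choquet space densely embedded in a metrizable space `Y` is comeager in `Y`. Indeed, build
levels of small open sets of `Y` whose traces are the answers of `N`'s winning strategy, each
level a maximal family with pairwise disjoint members refining the previous level: the union of
each level is dense open, and a point lying in every level is the limit of a single play, whose
nonempty intersection must then be that point. Hence `X` is a comeager subgroup of `X̂`; for
each `y`, the comeager sets `X` and `y⁻¹X` meet, so `y ∈ X`. Thus `X = X̂` is complete.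
-/

open Filter Topology Uniformity Function
open IsTopologicalGroup (leftUniformSpace rightUniformSpace)
open UniformSpace (Completion)

theorem IsUniformInducing.continuous_extend_of_cauchy {α β γ : Type*} [UniformSpace α]
    [UniformSpace β] [UniformSpace γ] [CompleteSpace γ] [T0Space γ] {e : α → β}
    (he : IsUniformInducing e) (hd : DenseRange e) {f : α → γ}
    (hf : ∀ F : Filter α, Cauchy F → Cauchy (map f F)) :
    Continuous ((he.isDenseInducing hd).extend f) := by
  refine (he.isDenseInducing hd).continuous_extend fun b => ?_
  have hb : Cauchy (comap e (𝓝 b)) :=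
    cauchy_nhds.comap' he.comap_uniformity.le ((he.isDenseInducing hd).comap_nhds_neBot b)
  exact CompleteSpace.complete (hf _ hb)

instance UniformSpace.Completion.isCountablyGenerated_uniformity {α : Type*} [UniformSpace α]
    [IsCountablyGenerated (𝓤 α)] : IsCountablyGenerated (𝓤 (Completion α)) :=
  let := UniformSpace.pseudoMetricSpace α
  inferInstance

section LeftUniformity

variable {G : Type*} [Group G] [TopologicalSpace G] [IsTopologicalGroup G]

theorem cauchy_leftUniformSpace_iff {F : Filter G} :
    Cauchy (uniformSpace := leftUniformSpace G) F ↔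
      NeBot F ∧ ∀ V ∈ 𝓝 (1 : G), ∃ t ∈ F, ∀ x ∈ t, ∀ y ∈ t, x⁻¹ * y ∈ V :=
  ((𝓝 (1 : G)).basis_sets.comap (fun p : G × G => p.1⁻¹ * p.2)).cauchy_iff
    (uniformSpace := leftUniformSpace G)

theorem cauchy_map_mul_leftUniformSpace {F₁ F₂ : Filter G}
    (h₁ : Cauchy (uniformSpace := leftUniformSpace G) F₁)
    (h₂ : Cauchy (uniformSpace := leftUniformSpace G) F₂) :
    Cauchy (uniformSpace := leftUniformSpace G)
      (map (fun p : G × G => p.1 * p.2) (F₁ ×ˢ F₂)) := by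
  rw [cauchy_leftUniformSpace_iff] at h₁ h₂ ⊢
  obtain ⟨hne₁, h₁⟩ := h₁
  obtain ⟨hne₂, h₂⟩ := h₂
  refine ⟨(hne₁.prod hne₂).map _, fun V hV => ?_⟩
  obtain ⟨N, hN, hNV⟩ := exists_nhds_one_split4 hV
  obtain ⟨t₂, ht₂, hNt₂⟩ := h₂ N hN
  obtain ⟨y₀, hy₀⟩ := hne₂.nonempty_of_mem ht₂
  have hconj : (fun w => y₀⁻¹ * w * y₀) ⁻¹' N ∈ 𝓝 (1 : G) :=
    ((continuous_const.mul continuous_id).mul continuous_const).tendsto' (1 : G) 1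
      (by simp) hN
  obtain ⟨t₁, ht₁, hNt₁⟩ := h₁ _ hconj
  refine ⟨_, image_mem_map (prod_mem_prod ht₁ ht₂), ?_⟩
  rintro _ ⟨⟨a₁, b₁⟩, ⟨ha₁, hb₁⟩, rfl⟩ _ ⟨⟨a₂, b₂⟩, ⟨ha₂, hb₂⟩, rfl⟩
  -- conjugating by a fixed `y₀` close to all `bᵢ` reduces to a product of four small factors
  have key : (a₁ * b₁)⁻¹ * (a₂ * b₂) = b₁⁻¹ * y₀ * (y₀⁻¹ * (a₁⁻¹ * a₂) * y₀) * (y₀⁻¹ * b₂) * 1 := by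
    group
  rw [key]
  exact hNV (hNt₂ _ hb₁ _ hy₀) (hNt₁ _ ha₁ _ ha₂) (hNt₂ _ hy₀ _ hb₂) (mem_of_mem_nhds hN)

end LeftUniformity

section TwoSidedUniformity

variable (G : Type*) [Group G] [TopologicalSpace G] [IsTopologicalGroup G]

abbrev twoSidedUniformSpace : UniformSpace G :=
  (leftUniformSpace G ⊓ rightUniformSpace G).replaceTopology (inf_idem _).symm

theorem twoSidedUniformSpace_eq : twoSidedUniformSpace G =
    leftUniformSpace G ⊓ rightUniformSpace G :=
  UniformSpace.replaceTopology_eq _ _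

theorem isCountablyGenerated_uniformity_twoSided [FirstCountableTopology G] :
    IsCountablyGenerated (𝓤[twoSidedUniformSpace G]) := by
  rw [twoSidedUniformSpace_eq, inf_uniformity]
  exact inferInstanceAs (IsCountablyGenerated (comap _ (𝓝 1) ⊓ comap _ (𝓝 1)))

variable {G}

theorem uniformContinuous_inv_twoSided :
    UniformContinuous[twoSidedUniformSpace G, twoSidedUniformSpace G] fun x : G => x⁻¹ := by
  rw [twoSidedUniformSpace_eq]
  have hRL := @UniformEquiv.uniformContinuous _ _ (rightUniformSpace G) (leftUniformSpace G)
    (UniformEquiv.inv G)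
  have hLR := @UniformEquiv.uniformContinuous_symm _ _ (rightUniformSpace G) (leftUniformSpace G)
    (UniformEquiv.inv G)
  exact hRL.inf_dom_right.inf_rng hLR.inf_dom_left

attribute [local instance] twoSidedUniformSpace

theorem cauchy_twoSided_iff {F : Filter G} :
    Cauchy F ↔ Cauchy (uniformSpace := leftUniformSpace G) F ∧
      Cauchy (uniformSpace := leftUniformSpace G) (map (·⁻¹) F) := by
  rw [twoSidedUniformSpace_eq]
  refine cauchy_inf_uniformSpace.trans (and_congr_right' ?_)
  rw [← comap_inv_leftUniformSpace, cauchy_comap_uniformSpace]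
  rfl

theorem cauchy_map_mul_twoSided {F₁ F₂ : Filter G} (h₁ : Cauchy F₁) (h₂ : Cauchy F₂) :
    Cauchy (map (fun p : G × G => p.1 * p.2) (F₁ ×ˢ F₂)) := by
  rw [cauchy_twoSided_iff] at h₁ h₂ ⊢
  refine ⟨cauchy_map_mul_leftUniformSpace h₁.1 h₂.1, ?_⟩
  have hinv : map (·⁻¹) (map (fun p : G × G => p.1 * p.2) (F₁ ×ˢ F₂)) =
      map (fun p : G × G => p.1 * p.2) (map (·⁻¹) F₂ ×ˢ map (·⁻¹) F₁) := by
    rw [prod_map_map_eq', prod_comm, map_map, map_map, map_map]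
    congr 1
    ext p
    simp
  rw [hinv]
  exact cauchy_map_mul_leftUniformSpace h₂.2 h₁.2

theorem Cauchy.map_mul_twoSided {F : Filter (G × G)} (hF : Cauchy F) :
    Cauchy (map (fun p : G × G => p.1 * p.2) F) := by
  have := hF.1
  rw [cauchy_prod_iff] at hF
  exact (cauchy_map_mul_twoSided hF.1 hF.2).mono (map_mono le_prod_map_fst_snd)

end TwoSidedUniformity

abbrev RaikovCompletion (G : Type*) [Group G] [TopologicalSpace G] [IsTopologicalGroup G] :=
  @Completion G (twoSidedUniformSpace G)

namespace RaikovCompletion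

variable {G : Type*} [Group G] [TopologicalSpace G] [IsTopologicalGroup G]

attribute [local instance] twoSidedUniformSpace

noncomputable instance : One (RaikovCompletion G) := ⟨((1 : G) : Completion G)⟩

noncomputable instance : Inv (RaikovCompletion G) := ⟨Completion.map fun x : G => x⁻¹⟩

noncomputable instance : Mul (RaikovCompletion G) :=
  ⟨curry <| (Completion.isDenseInducing_coe.prodMap Completion.isDenseInducing_coe).extend
    fun p : G × G => ((p.1 * p.2 : G) : Completion G)⟩

theorem coe_one : ((1 : G) : RaikovCompletion G) = 1 := rfl

theorem coe_inv (a : G) : ((a⁻¹ : G) : RaikovCompletion G) = (a : RaikovCompletion G)⁻¹ :=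
  (Completion.map_coe uniformContinuous_inv_twoSided a).symm

theorem coe_mul (a b : G) :
    ((a * b : G) : RaikovCompletion G) = (a : RaikovCompletion G) * (b : RaikovCompletion G) :=
  ((Completion.isDenseInducing_coe.prodMap Completion.isDenseInducing_coe).extend_eq
    ((Completion.continuous_coe G).comp continuous_mul) (a, b)).symm

theorem continuous_mul' :
    Continuous fun p : RaikovCompletion G × RaikovCompletion G => p.1 * p.2 :=
  let hcoe := Completion.isUniformInducing_coe G
  IsUniformInducing.continuous_extend_of_cauchy (hcoe.prod hcoe)
    (Completion.denseRange_coe.prodMap Completion.denseRange_coe) fun _ hF =>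
      hF.map_mul_twoSided.map (Completion.uniformContinuous_coe G)

noncomputable instance : Group (RaikovCompletion G) := by
  have hmul : Continuous fun p : RaikovCompletion G × RaikovCompletion G => p.1 * p.2 :=
    continuous_mul'
  have hinv : Continuous fun a : RaikovCompletion G => a⁻¹ := Completion.continuous_map
  refine Group.ofLeftAxioms (fun a b c => ?_) (fun a => ?_) (fun a => ?_)
  · refine Completion.induction_on₃ a b c (isClosed_eq (by fun_prop) (by fun_prop))
      fun a b c => ?_
    rw [← coe_mul, ← coe_mul, ← coe_mul, ← coe_mul, mul_assoc]
  · refine Completion.induction_on a (isClosed_eq (by fun_prop) continuous_id) fun a => ?_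
    rw [← coe_one, ← coe_mul, one_mul]
  · refine Completion.induction_on a (isClosed_eq (by fun_prop) continuous_const) fun a => ?_
    rw [← coe_inv, ← coe_mul, inv_mul_cancel, coe_one]

noncomputable instance : IsTopologicalGroup (RaikovCompletion G) where
  continuous_mul := continuous_mul'
  continuous_inv := Completion.continuous_map

variable (G) in
noncomputable def coeHom : G →* RaikovCompletion G where
  toFun := (↑)
  map_one' := coe_one
  map_mul' := coe_mul

end RaikovCompletion

theorem Subgroup.eq_top_of_mem_residual {Y : Type*} [Group Y] [TopologicalSpace Y]
    [IsTopologicalGroup Y] [BaireSpace Y] {H : Subgroup Y} (hH : (H : Set Y) ∈ residual Y) :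
    H = ⊤ := by
  refine eq_top_iff.2 fun y _ => ?_
  have hyH : (y * ·) ⁻¹' H ∈ residual Y := by
    rw [← (Homeomorph.mulLeft y).residual_map_eq] at hH
    exact hH
  obtain ⟨w, hw, hyw⟩ := (dense_of_mem_residual (inter_mem hH hyH)).nonempty
  simpa using H.mul_mem hyw (H.inv_mem hw)

theorem exists_pairwiseDisjoint_subset_maximal {ι α : Type*} (C : Set ι) (f : ι → Set α) :
    ∃ A ⊆ C, A.PairwiseDisjoint f ∧ ∀ i ∈ C, (f i).Nonempty → ∃ j ∈ A, (f i ∩ f j).Nonempty := by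
  obtain ⟨A, hA⟩ := zorn_subset {A | A ⊆ C ∧ A.PairwiseDisjoint f} fun K hK hchain =>
    ⟨⋃₀ K, ⟨sUnion_subset fun A hA => (hK hA).1,
      (pairwiseDisjoint_sUnion hchain.directedOn).2 fun A hA => (hK hA).2⟩,
      fun _ => subset_sUnion_of_mem⟩
  refine ⟨A, hA.prop.1, hA.prop.2, fun i hi hne => ?_⟩
  by_contra! hdisj
  have hins : insert i A ∈ {A | A ⊆ C ∧ A.PairwiseDisjoint f} :=
    ⟨insert_subset hi hA.prop.1, hA.prop.2.insert fun j hj _ =>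
      disjoint_iff_inter_eq_empty.2 (hdisj j hj)⟩
  have hiA : i ∈ A := hA.mem_of_prop_insert hins
  exact hne.ne_empty (by simpa using hdisj i hiA)

theorem choquetHist_headI_eq {G : Type*} {l : ℕ → List (Set G)} (h₀ : ∃ U, l 0 = [U])
    (hsucc : ∀ n, ∃ U, l (n + 1) = U :: l n) (n : ℕ) :
    choquetHist (fun k => (l k).headI) n = l n := by
  induction n with
  | zero => obtain ⟨U, hU⟩ := h₀; simp [choquetHist, hU]
  | succ n ih => obtain ⟨U, hU⟩ := hsucc n; simp [choquetHist, ih, hU]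

theorem eq_of_forall_mem_ball_inv_two_pow {Y : Type*} [MetricSpace Y] {x y : Y}
    (h : ∀ n : ℕ, ∃ z, x ∈ Metric.ball z ((2⁻¹ : ℝ) ^ n) ∧ y ∈ Metric.ball z ((2⁻¹ : ℝ) ^ n)) :
    x = y := by
  refine eq_of_forall_dist_le fun ε hε => ?_
  obtain ⟨n, hn⟩ := exists_pow_lt_of_lt_one (half_pos hε) (by norm_num : (2⁻¹ : ℝ) < 1)
  obtain ⟨z, hxz, hyz⟩ := h n
  rw [Metric.mem_ball] at hxz hyz
  linarith [dist_triangle_right x y z]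

namespace ChoquetTree

variable {G Y : Type*} [TopologicalSpace G] [MetricSpace Y]

/-- `E`'s moves so far (most recent first), with an open `cell` of `Y` whose trace on `G` will be
`N`'s answer to them. -/
structure Node (G Y : Type*) where
  pos : List (Set G)
  cell : Set Y

variable (σ : List (Set G) → Set G) (c : G → Y)

def root : Node G Y := ⟨[], univ⟩

structure IsChild (n : ℕ) (p q : Node G Y) : Prop where
  choquetPos : ChoquetPos σ q.pos
  isOpen_cell : IsOpen q.cell
  cell_nonempty : q.cell.Nonempty
  preimage_cell : c ⁻¹' q.cell = σ q.pos
  cell_subset_ball : ∃ z, q.cell ⊆ Metric.ball z ((2⁻¹ : ℝ) ^ n)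
  cell_subset : q.cell ⊆ p.cell
  pos_eq : ∃ U ⊆ c ⁻¹' p.cell, q.pos = U :: p.pos

def IsExtendable (p : Node G Y) : Prop :=
  IsOpen p.cell ∧
    ∀ U, IsOpen U → U.Nonempty → U ⊆ c ⁻¹' p.cell → ChoquetPos σ (U :: p.pos)

noncomputable def nextLevel (n : ℕ) (S : Set (Node G Y)) : Set (Node G Y) :=
  (exists_pairwiseDisjoint_subset_maximal {q | ∃ p ∈ S, IsChild σ c n p q} Node.cell).choose

/-- Maximality makes the cells of each level dense, disjointness makes a point lying in cells of
all levels determine a single play. -/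
noncomputable def level : ℕ → Set (Node G Y)
  | 0 => {root}
  | n + 1 => nextLevel σ c n (level n)

variable {σ c}

theorem nextLevel_spec (n : ℕ) (S : Set (Node G Y)) :
    nextLevel σ c n S ⊆ {q | ∃ p ∈ S, IsChild σ c n p q} ∧
      (nextLevel σ c n S).PairwiseDisjoint Node.cell ∧
      ∀ q, (∃ p ∈ S, IsChild σ c n p q) → q.cell.Nonempty →
        ∃ r ∈ nextLevel σ c n S, (q.cell ∩ r.cell).Nonempty :=
  (exists_pairwiseDisjoint_subset_maximal _ _).choose_spec

theorem isExtendable_root : IsExtendable σ c (root : Node G Y) :=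
  ⟨isOpen_univ, fun U hU hne _ => ChoquetPos.single U hU hne⟩

theorem IsChild.isExtendable {n : ℕ} {p q : Node G Y} (h : IsChild σ c n p q) :
    IsExtendable σ c q :=
  ⟨h.isOpen_cell, fun U hU hne hUq => ChoquetPos.cons U _ h.choquetPos hU hne
    (h.preimage_cell ▸ hUq)⟩

theorem isExtendable_of_mem_level {n : ℕ} {p : Node G Y} (hp : p ∈ level σ c n) :
    IsExtendable σ c p := by
  cases n with
  | zero => exact (mem_singleton_iff.1 hp) ▸ isExtendable_root
  | succ n =>
    obtain ⟨_, -, h⟩ := (nextLevel_spec n _).1 hp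
    exact h.isExtendable

theorem exists_isChild (hσ : IsWinningChoquetStrategy σ) (hc : IsInducing c) (hd : DenseRange c)
    (n : ℕ) {p : Node G Y} (hp : IsExtendable σ c p) {O : Set Y} (hO : IsOpen O)
    (hne : O.Nonempty) (hOp : O ⊆ p.cell) : ∃ q, IsChild σ c n p q ∧ q.cell ⊆ O := by
  obtain ⟨a, ha⟩ := hd.exists_mem_open hO hne
  set B := O ∩ Metric.ball (c a) ((2⁻¹ : ℝ) ^ n)
  have hB : IsOpen B := hO.inter Metric.isOpen_ball
  have haB : a ∈ c ⁻¹' B := ⟨ha, Metric.mem_ball_self (by positivity)⟩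
  have hBp : c ⁻¹' B ⊆ c ⁻¹' p.cell := fun x hx => hOp hx.1
  have hpos : ChoquetPos σ (c ⁻¹' B :: p.pos) := hp.2 _ (hB.preimage hc.continuous) ⟨a, haB⟩ hBp
  obtain ⟨hσo, ⟨b, hb⟩, hσB⟩ := hσ.1 _ hpos
  replace hσB : σ (c ⁻¹' B :: p.pos) ⊆ c ⁻¹' B := hσB _ rfl
  obtain ⟨V, hV, hVσ⟩ := hc.isOpen_iff.1 hσo
  refine ⟨⟨c ⁻¹' B :: p.pos, V ∩ B⟩, ⟨hpos, hV.inter hB, ⟨c b, ?_, hσB hb⟩, ?_,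
    ⟨c a, inter_subset_right.trans inter_subset_right⟩,
    inter_subset_right.trans (inter_subset_left.trans hOp), ⟨_, hBp, rfl⟩⟩,
    inter_subset_right.trans inter_subset_left⟩
  · rw [← mem_preimage, hVσ]
    exact hb
  · rw [preimage_inter, hVσ]
    exact inter_eq_left.2 hσB

theorem dense_biUnion_level (hσ : IsWinningChoquetStrategy σ) (hc : IsInducing c)
    (hd : DenseRange c) (n : ℕ) : Dense (⋃ p ∈ level σ c n, p.cell) := by
  induction n with
  | zero => simp [level, root]
  | succ n ih =>
    refine dense_iff_inter_open.2 fun O hO hne => ?_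
    obtain ⟨x, hxO, hx⟩ := dense_iff_inter_open.1 ih O hO hne
    obtain ⟨p, hp, hxp⟩ := mem_iUnion₂.1 hx
    have hpe := isExtendable_of_mem_level hp
    obtain ⟨q, hq, hqO⟩ := exists_isChild hσ hc hd n hpe (hO.inter hpe.1) ⟨x, hxO, hxp⟩
      inter_subset_right
    obtain ⟨r, hr, y, hyq, hyr⟩ := (nextLevel_spec n _).2.2 q ⟨p, hp, hq⟩ hq.cell_nonempty
    exact ⟨y, (hqO hyq).1, mem_biUnion hr hyr⟩

theorem exists_isChild_of_mem_level {n : ℕ} {q : Node G Y} (hq : q ∈ level σ c (n + 1)) :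
    ∃ p ∈ level σ c n, IsChild σ c n p q :=
  (nextLevel_spec n _).1 hq

theorem eq_of_mem_level_of_mem_cell {n : ℕ} {p q : Node G Y} (hp : p ∈ level σ c (n + 1))
    (hq : q ∈ level σ c (n + 1)) {x : Y} (hxp : x ∈ p.cell) (hxq : x ∈ q.cell) : p = q := by
  by_contra hne
  exact disjoint_left.1 ((nextLevel_spec n _).2.1 hp hq hne) hxp hxq

theorem mem_range_of_forall_mem_level (hσ : IsWinningChoquetStrategy σ) {x : Y}
    (hx : ∀ n, x ∈ ⋃ p ∈ level σ c (n + 1), p.cell) : x ∈ range c := by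
  choose p hp hxp using fun n => mem_iUnion₂.1 (hx n)
  have hchild : ∀ n, IsChild σ c (n + 1) (p n) (p (n + 1)) := fun n => by
    obtain ⟨r, hr, h⟩ := exists_isChild_of_mem_level (hp (n + 1))
    rwa [eq_of_mem_level_of_mem_cell hr (hp n) (h.cell_subset (hxp (n + 1))) (hxp n)] at h
  obtain ⟨r, hr, h₀⟩ := exists_isChild_of_mem_level (hp 0)
  have hlevel : ∀ n, ∃ r, IsChild σ c n r (p n) := fun n => by
    cases n with
    | zero => exact ⟨r, h₀⟩
    | succ n => exact ⟨p n, hchild n⟩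
  have hhist : ∀ n, choquetHist (fun k => (p k).pos.headI) n = (p n).pos := by
    refine choquetHist_headI_eq ?_ fun n => ?_
    · obtain ⟨U, -, hU⟩ := h₀.pos_eq
      rw [mem_singleton_iff.1 hr] at hU
      exact ⟨U, hU⟩
    · obtain ⟨U, -, hU⟩ := (hchild n).pos_eq
      exact ⟨U, hU⟩
  obtain ⟨y, hy⟩ := hσ.2 _ fun n => (hhist n).symm ▸ (hlevel n).choose_spec.choquetPos
  have hcy : ∀ n, c y ∈ (p n).cell := fun n => by
    obtain ⟨U, hU, hpos⟩ := (hchild n).pos_eq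
    have hyU : y ∈ (p (n + 1)).pos.headI := mem_iInter.1 hy (n + 1)
    rw [hpos] at hyU
    exact hU hyU
  refine ⟨y, eq_of_forall_mem_ball_inv_two_pow fun n => ?_⟩
  obtain ⟨z, hz⟩ := (hlevel n).choose_spec.cell_subset_ball
  exact ⟨z, hz (hcy n), hz (hxp n)⟩

end ChoquetTree

theorem IsChoquet.range_mem_residual {G Y : Type*} [TopologicalSpace G] [TopologicalSpace Y]
    [TopologicalSpace.MetrizableSpace Y] (hG : IsChoquet G) {c : G → Y} (hc : IsInducing c)
    (hd : DenseRange c) : range c ∈ residual Y := by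
  let := TopologicalSpace.metrizableSpaceMetric Y
  obtain ⟨σ, hσ⟩ := hG
  have hopen (n : ℕ) : IsOpen (⋃ p ∈ ChoquetTree.level σ c n, p.cell) :=
    isOpen_biUnion fun _ hp => (ChoquetTree.isExtendable_of_mem_level hp).1
  refine mem_of_superset (countable_iInter_mem.2 fun n =>
    residual_of_dense_open (hopen (n + 1)) (ChoquetTree.dense_biUnion_level hσ hc hd (n + 1)))
    fun x hx => ChoquetTree.mem_range_of_forall_mem_level hσ (mem_iInter.1 hx)

theorem IsChoquet.surjective_of_denseRange {G Y : Type*} [Group G] [TopologicalSpace G]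
    [Group Y] [TopologicalSpace Y] [IsTopologicalGroup Y] [TopologicalSpace.MetrizableSpace Y]
    [BaireSpace Y] (hG : IsChoquet G) (f : G →* Y) (hf : IsInducing f) (hd : DenseRange f) :
    Surjective f := by
  rw [← MonoidHom.range_eq_top]
  exact Subgroup.eq_top_of_mem_residual (by simpa using hG.range_mem_residual hf hd)

theorem IsChoquet.completeSpace_twoSided {G : Type*} [Group G] [TopologicalSpace G]
    [IsTopologicalGroup G] [TopologicalSpace.MetrizableSpace G] (hG : IsChoquet G) :
    @CompleteSpace G (twoSidedUniformSpace G) := by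
  let := twoSidedUniformSpace G
  have := isCountablyGenerated_uniformity_twoSided G
  have : TopologicalSpace.MetrizableSpace (RaikovCompletion G) := UniformSpace.metrizableSpace
  have hcoe := Completion.isUniformInducing_coe G
  have hsurj := hG.surjective_of_denseRange (RaikovCompletion.coeHom G) hcoe.isInducing
    Completion.denseRange_coe
  exact (completeSpace_iff_isComplete_range hcoe).2 (hsurj.range_eq ▸ isComplete_univ)

/-- Every metrizable topological group `X` that is a Choquet space is
completely metrizable. -/
theorem statement_11 {X : Type*} [TopologicalSpace X] [Group X] [IsTopologicalGroup X]
    [TopologicalSpace.MetrizableSpace X] (hChoquet : IsChoquet X) :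
    IsCompletelyMetrizable X := by
  let := twoSidedUniformSpace X
  have := isCountablyGenerated_uniformity_twoSided X
  have := hChoquet.completeSpace_twoSided
  exact TopologicalSpace.IsCompletelyMetrizableSpace.of_completeSpace_metrizable.complete
end
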